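/- For any noncrossing pair partition π of {1,...,2k}, ∫_{[0,1]×[−1,1]^k} Π_{j=1}^{2k} 1_{[0,1]}(x_0 + Σ_{q=1}^j ε_π(q) x_{π(q)}) dx_0 dx_1 ··· dx_k = 1, where ε_π(q) = +1 if q is the smaller element of its block and −1 otherwise, and π(q) is the label of the block containing q (blocks labeled 1,...,k). -/

import Mathlib

open Matrix MeasureTheory
open scoped Kronecker BigOperators

/-- `a i, b i` list the blocks `{a i, b i}` of a pair partition of `{0,...,2k-1}`,
with `a i < b i` and blocks labeled so that `a` is increasing. -/
abbrev IsPairPart (k : ℕ) (a b : Fin k → Fin (2*k)) : Prop :=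
  (∀ i, a i < b i) ∧ (∀ i j : Fin k, i < j → a i < a j) ∧
  (∀ i j : Fin k, i ≠ j → a i ≠ a j ∧ a i ≠ b j ∧ b i ≠ b j) ∧
  (∀ x : Fin (2*k), ∃ i, x = a i ∨ x = b i)

/-- cyclic successor -/
def cyc {n : ℕ} (x : Fin n) : Fin n := ⟨(x.val + 1) % n, Nat.mod_lt _ x.pos⟩

/-- the relation generated by the equations `t_{a i} = t_{cyc (b i)}`, `t_{b i} = t_{cyc (a i)}` -/
def ppRel {k : ℕ} (a b : Fin k → Fin (2*k)) (x y : Fin (2*k)) : Prop :=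
  ∃ i, (x = a i ∧ y = cyc (b i)) ∨ (x = b i ∧ y = cyc (a i))

/-- `g(π)`: the number of equivalence classes ("circles") -/
noncomputable def gCircles {k : ℕ} (a b : Fin k → Fin (2*k)) : ℕ :=
  Nat.card (Quotient (Relation.EqvGen.setoid (ppRel a b)))

/-- coefficient matrix over ℚ of the linear system determined by the pair partition -/
def eqMat {k : ℕ} (a b : Fin k → Fin (2*k)) : Matrix (Fin k ⊕ Fin k) (Fin (2*k)) ℚ :=
  fun e x => match e with
  | Sum.inl i => (if x = a i then 1 else 0) - (if x = cyc (b i) then 1 else 0)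
  | Sum.inr i => (if x = b i then 1 else 0) - (if x = cyc (a i) then 1 else 0)

/-- `f(π)`: the rank of the linear system -/
noncomputable def fRank {k : ℕ} (a b : Fin k → Fin (2*k)) : ℕ := (eqMat a b).rank

/-- noncrossing pair partition -/
def Noncross {k : ℕ} (a b : Fin k → Fin (2*k)) : Prop :=
  ¬ ∃ i j, a i < a j ∧ a j < b i ∧ b i < b j

abbrev PP (k : ℕ) := {p : (Fin k → Fin (2*k)) × (Fin k → Fin (2*k)) // IsPairPart k p.1 p.2}

noncomputable section

/-- the label of the block containing `q` -/
def blk {k : ℕ} {a b : Fin k → Fin (2*k)} (h : IsPairPart k a b) (q : Fin (2*k)) : Fin k :=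
  (h.2.2.2 q).choose

/-- `ε_π(q) = 1` if `q` is the smaller element of its block, `-1` otherwise -/
def eps {k : ℕ} {a b : Fin k → Fin (2*k)} (h : IsPairPart k a b) (q : Fin (2*k)) : ℝ :=
  if q = a (blk h q) then 1 else -1

/-- `I(π) = ∫_{[0,1]×[-1,1]^k} ∏_{j=1}^{2k} 1_{[0,1]}(x_0 + Σ_{q=1}^j ε_π(q) x_{π(q)}) dx` -/
def ppIntegral {k : ℕ} {a b : Fin k → Fin (2*k)} (h : IsPairPart k a b) : ℝ :=
  ∫ x in Set.univ.pi
      (fun l : Fin (k+1) => if l = 0 then Set.Icc (0:ℝ) 1 else Set.Icc (-1) 1),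
    ∏ j : Fin (2*k), Set.indicator (Set.Icc (0:ℝ) 1) (fun _ => (1:ℝ))
      (x 0 + ∑ q ∈ Finset.Iic j, eps h q * x (blk h q).succ)

/-- the `2k`-th moment of `γ_T^{(m)}`:
`m_{2k} = Σ_{π ∈ P₂(2k)} m^{k-1-f(π)} I(π)`. -/
def mom (m k : ℕ) : ℝ :=
  ∑ p : PP k, (m : ℝ) ^ ((k : ℤ) - 1 - (fRank p.1.1 p.1.2 : ℤ)) * ppIntegral p.2

end

/-!
For a noncrossing `π` every block interval `[a i, b i]` is a union of blocks, so the signed sum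
over it cancels: the partial sum right after a closer `b i` equals the partial sum just before its
opener `a i`. Hence all `2k` constraints follow from `x₀ ∈ [0,1]` together with the `k`
constraints right after the openers, and these also force `x_{i+1}`, the jump of the partial sums
at `a i`, into `[-1,1]`. The domain of integration is thus the preimage of the unit cube under
`x ↦ (x₀, partial sums right after the openers)`, a unit lower triangular linear map, so it has
volume `1`.
-/

open Finset

variable {k : ℕ} {a b : Fin k → Fin (2*k)}

section PairPartition

lemma sumElim_injective (h : IsPairPart k a b) : Function.Injective (Sum.elim a b) := by
  obtain ⟨hlt, -, hne, -⟩ := h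
  rintro (i | i) (j | j) hij <;> simp only [Sum.elim_inl, Sum.elim_inr] at hij <;> grind

lemma sumElim_surjective (h : IsPairPart k a b) : Function.Surjective (Sum.elim a b) :=
  fun q => by
    obtain ⟨i, hi | hi⟩ := h.2.2.2 q
    exacts [⟨.inl i, hi.symm⟩, ⟨.inr i, hi.symm⟩]

lemma sum_eq_sum_blocks (h : IsPairPart k a b) {M : Type*} [AddCommMonoid M]
    (g : Fin (2*k) → M) : ∑ q, g q = ∑ i, (g (a i) + g (b i)) := by
  rw [← (Equiv.ofBijective _ ⟨sumElim_injective h, sumElim_surjective h⟩).sum_comp,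
    Fintype.sum_sum_type, ← sum_add_distrib]
  rfl

variable (h : IsPairPart k a b)

lemma blk_a (i : Fin k) : blk h (a i) = i := by
  rcases (h.2.2.2 (a i)).choose_spec with e | e
  · exact Sum.inl_injective (sumElim_injective h (a₁ := .inl _) (a₂ := .inl i) e.symm)
  · exact absurd (sumElim_injective h (a₁ := .inr _) (a₂ := .inl i) e.symm) Sum.inr_ne_inl

lemma blk_b (i : Fin k) : blk h (b i) = i := by
  rcases (h.2.2.2 (b i)).choose_spec with e | e
  · exact absurd (sumElim_injective h (a₁ := .inl _) (a₂ := .inr i) e.symm) Sum.inl_ne_inr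
  · exact Sum.inr_injective (sumElim_injective h (a₁ := .inr _) (a₂ := .inr i) e.symm)

lemma eps_a (i : Fin k) : eps h (a i) = 1 := by
  rw [eps, blk_a h, if_pos rfl]

lemma eps_b (i : Fin k) : eps h (b i) = -1 := by
  rw [eps, blk_b h, if_neg (h.1 i).ne']

end PairPartition

section BlockWeight

def blockWeight (a b : Fin k → Fin (2*k)) (S : Finset (Fin (2*k))) (i : Fin k) : ℝ :=
  (if a i ∈ S then 1 else 0) - if b i ∈ S then 1 else 0

lemma sum_eps_mul_eq_sum_blockWeight (h : IsPairPart k a b) (S : Finset (Fin (2*k)))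
    (y : Fin k → ℝ) :
    ∑ q ∈ S, eps h q * y (blk h q) = ∑ i, blockWeight a b S i * y i := by
  rw [← sum_ite_mem_eq, sum_eq_sum_blocks h]
  refine sum_congr rfl fun i _ => ?_
  simp only [blockWeight, eps_a, eps_b, blk_a, blk_b]
  split_ifs <;> ring

lemma blockWeight_Icc_eq_zero (h : IsPairPart k a b) (hnc : Noncross a b) (i m : Fin k) :
    blockWeight a b (Icc (a i) (b i)) m = 0 := by
  suffices a m ∈ Icc (a i) (b i) ↔ b m ∈ Icc (a i) (b i) by simp [blockWeight, this]
  obtain ⟨hlt, -, hne, -⟩ := h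
  obtain rfl | hmi := eq_or_ne m i
  · simp [(hlt m).le]
  have := hne m i hmi
  have := hne i m hmi.symm
  have := hlt i
  have := hlt m
  have : ¬(a i < a m ∧ a m < b i ∧ b i < b m) := fun hc => hnc ⟨i, m, hc⟩
  have : ¬(a m < a i ∧ a i < b m ∧ b m < b i) := fun hc => hnc ⟨m, i, hc⟩
  simp only [mem_Icc]
  grind

lemma blockWeight_Iic_of_lt (h : IsPairPart k a b) {i m : Fin k} (him : i < m) :
    blockWeight a b (Iic (a i)) m = 0 := by
  have ham := Fin.lt_def.mp (h.2.1 i m him)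
  have hbm := Fin.lt_def.mp (h.1 m)
  simp only [blockWeight, mem_Iic, Fin.le_def]
  rw [if_neg (by omega), if_neg (by omega), sub_zero]

lemma blockWeight_Iic_self (h : IsPairPart k a b) (i : Fin k) :
    blockWeight a b (Iic (a i)) i = 1 := by
  have hbi := Fin.lt_def.mp (h.1 i)
  simp only [blockWeight, mem_Iic, Fin.le_def]
  rw [if_pos (by omega), if_neg (by omega), sub_zero]

end BlockWeight

section PrefixSum

variable (h : IsPairPart k a b) (x : Fin (k+1) → ℝ)

noncomputable def prefixSum (n : ℕ) : ℝ :=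
  x 0 + ∑ q with q.val < n, eps h q * x (blk h q).succ

lemma prefixSum_zero : prefixSum h x 0 = x 0 := by
  simp [prefixSum]

lemma prefixSum_succ (q : Fin (2*k)) :
    prefixSum h x (q.val + 1) = prefixSum h x q + eps h q * x (blk h q).succ := by
  have hS : univ.filter (fun r : Fin (2*k) => r.val < q.val + 1) =
      insert q (univ.filter fun r => r.val < q.val) := by
    ext r; simp only [mem_filter, mem_univ, true_and, mem_insert, Fin.ext_iff]; omega
  rw [prefixSum, prefixSum, hS, sum_insert (by simp)]
  ring

lemma sum_Iic_eq_prefixSum (j : Fin (2*k)) :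
    x 0 + ∑ q ∈ Iic j, eps h q * x (blk h q).succ = prefixSum h x (j.val + 1) := by
  have hS : Iic j = univ.filter fun r : Fin (2*k) => r.val < j.val + 1 := by
    ext r; simp only [mem_Iic, mem_filter, mem_univ, true_and, Fin.le_def]; omega
  rw [prefixSum, hS]

lemma prefixSum_b_add_one (hnc : Noncross a b) (i : Fin k) :
    prefixSum h x ((b i).val + 1) = prefixSum h x (a i) := by
  have hab := Fin.lt_def.mp (h.1 i)
  have hS : univ.filter (fun r : Fin (2*k) => r.val < (b i).val + 1) =
      univ.filter (fun r => r.val < (a i).val) ∪ Icc (a i) (b i) := by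
    ext r; simp only [mem_filter, mem_univ, true_and, mem_union, mem_Icc, Fin.le_def]; omega
  have hdisj : Disjoint (univ.filter fun r : Fin (2*k) => r.val < (a i).val) (Icc (a i) (b i)) := by
    simp only [disjoint_left, mem_filter, mem_univ, true_and, mem_Icc, Fin.le_def]; omega
  rw [prefixSum, prefixSum, hS, sum_union hdisj,
    sum_eps_mul_eq_sum_blockWeight h (Icc (a i) (b i)) fun m => x m.succ]
  simp [blockWeight_Icc_eq_zero h hnc]

end PrefixSum

section Bounds

variable (h : IsPairPart k a b) {x : Fin (k+1) → ℝ}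

lemma prefixSum_mem_Icc (hnc : Noncross a b) (h0 : x 0 ∈ Set.Icc 0 1)
    (ha : ∀ i, prefixSum h x ((a i).val + 1) ∈ Set.Icc 0 1) (n : ℕ) (hn : n ≤ 2 * k) :
    prefixSum h x n ∈ Set.Icc 0 1 := by
  induction n using Nat.strong_induction_on with
  | _ n ih =>
  rcases n with _ | n
  · rwa [prefixSum_zero]
  obtain ⟨i, hi | hi⟩ := h.2.2.2 ⟨n, hn⟩
  · rw [show n = (a i).val from congrArg Fin.val hi]
    exact ha i
  · have hab : (a i).val < n := Fin.lt_def.mp (hi ▸ h.1 i : a i < ⟨n, hn⟩)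
    rw [show n = (b i).val from congrArg Fin.val hi, prefixSum_b_add_one h x hnc]
    exact ih _ (by omega) (by omega)

lemma succ_mem_Icc_neg_one_one (hnc : Noncross a b) (h0 : x 0 ∈ Set.Icc 0 1)
    (ha : ∀ i, prefixSum h x ((a i).val + 1) ∈ Set.Icc 0 1) (i : Fin k) :
    x i.succ ∈ Set.Icc (-1) 1 := by
  have hstep := prefixSum_succ h x (a i)
  rw [eps_a, blk_a, one_mul] at hstep
  have hlo := prefixSum_mem_Icc h hnc h0 ha (a i) (a i).isLt.le
  have hhi := ha i
  rw [Set.mem_Icc] at hlo hhi ⊢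
  constructor <;> linarith

end Bounds

section PrefixMatrix

def prefixMatrix (a b : Fin k → Fin (2*k)) : Matrix (Fin (k+1)) (Fin (k+1)) ℝ :=
  Matrix.of <| Fin.cons (Pi.single 0 1) fun i => Fin.cons 1 (blockWeight a b (Iic (a i)))

lemma prefixMatrix_mulVec_zero (x : Fin (k+1) → ℝ) : (prefixMatrix a b *ᵥ x) 0 = x 0 := by
  simp [prefixMatrix, mulVec, dotProduct, Pi.single_apply]

lemma prefixMatrix_mulVec_succ (h : IsPairPart k a b) (x : Fin (k+1) → ℝ) (i : Fin k) :
    (prefixMatrix a b *ᵥ x) i.succ = prefixSum h x ((a i).val + 1) := by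
  rw [← sum_Iic_eq_prefixSum, sum_eps_mul_eq_sum_blockWeight h _ fun m => x m.succ]
  simp [prefixMatrix, mulVec, dotProduct, Fin.sum_univ_succ]

lemma isLowerTriangular_prefixMatrix (h : IsPairPart k a b) :
    (prefixMatrix a b).IsLowerTriangular := by
  intro l m (hlm : l < m)
  induction l using Fin.cases with
  | zero => simp [prefixMatrix, hlm.ne']
  | succ i =>
    obtain ⟨m, rfl⟩ := Fin.exists_succ_eq.mpr ((Fin.succ_pos i).trans hlm).ne'
    simpa [prefixMatrix] using blockWeight_Iic_of_lt h (Fin.succ_lt_succ_iff.mp hlm)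

lemma det_prefixMatrix (h : IsPairPart k a b) : (prefixMatrix a b).det = 1 := by
  rw [det_of_isLowerTriangular _ (isLowerTriangular_prefixMatrix h), Fin.prod_univ_succ]
  simp [prefixMatrix, blockWeight_Iic_self h]

lemma volume_preimage_prefixMatrix (h : IsPairPart k a b) (s : Set (Fin (k+1) → ℝ)) :
    volume (toLin' (prefixMatrix a b) ⁻¹' s) = volume s := by
  have hdet : LinearMap.det (toLin' (prefixMatrix a b)) = 1 := by
    rw [LinearMap.det_toLin', det_prefixMatrix h]
  simp [Measure.addHaar_preimage_linearMap _ (hdet ▸ one_ne_zero), hdet]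

end PrefixMatrix

section Integral

def admissibleSet (h : IsPairPart k a b) : Set (Fin (k+1) → ℝ) :=
  {x | ∀ j : Fin (2*k), prefixSum h x (j.val + 1) ∈ Set.Icc 0 1}

lemma measurableSet_admissibleSet (h : IsPairPart k a b) : MeasurableSet (admissibleSet h) := by
  rw [admissibleSet, Set.ofPred_forall]
  exact (isClosed_iInter fun j => isClosed_Icc.preimage (by unfold prefixSum; fun_prop))
    |>.measurableSet

lemma prod_indicator_eq_indicator_admissibleSet (h : IsPairPart k a b) (x : Fin (k+1) → ℝ) :
    ∏ j : Fin (2*k), (Set.Icc (0:ℝ) 1).indicator (fun _ => (1:ℝ))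
      (x 0 + ∑ q ∈ Iic j, eps h q * x (blk h q).succ) = (admissibleSet h).indicator 1 x := by
  simp only [sum_Iic_eq_prefixSum]
  by_cases hx : x ∈ admissibleSet h
  · rw [Set.indicator_of_mem hx]
    exact prod_eq_one fun j _ => Set.indicator_of_mem (hx j) _
  · obtain ⟨j, hj⟩ := not_forall.mp hx
    rw [Set.indicator_of_notMem hx]
    exact prod_eq_zero (mem_univ j) (Set.indicator_of_notMem hj _)

lemma box_inter_admissibleSet_eq_preimage (h : IsPairPart k a b) (hnc : Noncross a b) :
    Set.univ.pi (fun l : Fin (k+1) => if l = 0 then Set.Icc (0:ℝ) 1 else Set.Icc (-1) 1) ∩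
      admissibleSet h = toLin' (prefixMatrix a b) ⁻¹' Set.univ.pi fun _ => Set.Icc 0 1 := by
  ext x
  simp only [Set.mem_inter_iff, Set.mem_pi, Set.mem_univ, true_implies, admissibleSet,
    Set.mem_ofPred_eq, Set.mem_preimage, toLin'_apply]
  constructor
  · rintro ⟨hbox, hadm⟩ l
    induction l using Fin.cases with
    | zero => simpa [prefixMatrix_mulVec_zero] using hbox 0
    | succ i => simpa [prefixMatrix_mulVec_succ h] using hadm (a i)
  · intro hx
    have h0 : x 0 ∈ Set.Icc 0 1 := by simpa [prefixMatrix_mulVec_zero] using hx 0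
    have ha i : prefixSum h x ((a i).val + 1) ∈ Set.Icc 0 1 := by
      simpa [prefixMatrix_mulVec_succ h] using hx i.succ
    refine ⟨fun l => ?_, fun j => prefixSum_mem_Icc h hnc h0 ha _ j.isLt⟩
    induction l using Fin.cases with
    | zero => simpa using h0
    | succ i => simpa using succ_mem_Icc_neg_one_one h hnc h0 ha i

lemma ppIntegral_eq_one (h : IsPairPart k a b) (hnc : Noncross a b) : ppIntegral h = 1 := by
  simp_rw [ppIntegral, prod_indicator_eq_indicator_admissibleSet,
    setIntegral_indicator (measurableSet_admissibleSet h), Pi.one_apply, setIntegral_const,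
    box_inter_admissibleSet_eq_preimage h hnc, measureReal_def, volume_preimage_prefixMatrix h,
    volume_pi_pi]
  simp

end Integral

theorem ppIntegral_eq_one_of_noncross (k : ℕ) (p : PP k)
    (hnc : Noncross p.1.1 p.1.2) :
    ppIntegral p.2 = 1 :=
  ppIntegral_eq_one p.2 hnc
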